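/- arXiv:2102.00104 — 2 statements merged into one kernel-verified Lean document; each statement's English description precedes it below -/
import Mathlib

section
/- Let M₁ ∈ ℝ^{n₁×m}, M₂ ∈ ℝ^{n₂×m}, and let R₁ be the triangular factor of a QR decomposition of M₁ (M₁ = Q₁R₁ with Q₁ᵀQ₁ = I). If R₁₂ is the triangular factor of a QR decomposition of the stacked matrix (M₂; R₁), then R₁₂ is also the triangular factor of a QR decomposition of the stacked matrix (M₁; M₂). -/
open Matrix

/-- TSQR reduction correctness: if `M₁ = Q₁ R₁` with `Q₁ᵀQ₁ = I` and the stacked matrix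
`(M₂; R₁) = Q₂ R₁₂` with `Q₂ᵀQ₂ = I`, then `R₁₂` is the triangular factor of a QR
decomposition of the stacked matrix `(M₁; M₂)`. -/
theorem stmt_6 (n₁ n₂ m : ℕ)
    (M₁ : Matrix (Fin n₁) (Fin m) ℝ) (M₂ : Matrix (Fin n₂) (Fin m) ℝ)
    (Q₁ : Matrix (Fin n₁) (Fin m) ℝ) (R₁ : Matrix (Fin m) (Fin m) ℝ)
    (hQ₁ : Q₁ᵀ * Q₁ = 1) (hQR₁ : M₁ = Q₁ * R₁)
    (Q₂ : Matrix (Fin n₂ ⊕ Fin m) (Fin m) ℝ) (R₁₂ : Matrix (Fin m) (Fin m) ℝ)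
    (hQ₂ : Q₂ᵀ * Q₂ = 1) (hQR₂ : Matrix.fromRows M₂ R₁ = Q₂ * R₁₂) :
    ∃ Q : Matrix (Fin n₁ ⊕ Fin n₂) (Fin m) ℝ,
      Qᵀ * Q = 1 ∧ Matrix.fromRows M₁ M₂ = Q * R₁₂ := by
  set A := Q₂.toRows₁ with hA
  set B := Q₂.toRows₂ with hB
  have hQ₂' : Q₂ = fromRows A B := (fromRows_toRows Q₂).symm
  rw [hQ₂', fromRows_mul] at hQR₂
  have hM₂ : M₂ = A * R₁₂ := congrArg toRows₁ hQR₂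
  have hR₁ : R₁ = B * R₁₂ := congrArg toRows₂ hQR₂
  have hQ₂'' : Bᵀ * B + Aᵀ * A = 1 := by
    rw [hQ₂', transpose_fromRows, fromCols_mul_fromRows] at hQ₂
    rw [add_comm]; exact hQ₂
  refine ⟨fromRows (Q₁ * B) A, ?_, ?_⟩
  · rw [transpose_fromRows, fromCols_mul_fromRows, transpose_mul,
      Matrix.mul_assoc Bᵀ, ← Matrix.mul_assoc Q₁ᵀ, hQ₁, one_mul, hQ₂'']
  · rw [fromRows_mul, ← hM₂, hQR₁, hR₁, ← Matrix.mul_assoc]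
end

section
/- Conversely, if every unfolding X_{(k)} of a tensor X ∈ ℝ^{n₁×⋯×n_d} has rank at most r_k for k = 1,…,d-1, then there exists an exact tensor-train decomposition of X with TT-ranks at most r₁,…,r_{d-1}, in the case d = 3: if X_{(1)} has rank ≤ r₁ and X_{(2)} has rank ≤ r₂, then there exist T⁽¹⁾ ∈ ℝ^{1×n₁×r₁}, T⁽²⁾ ∈ ℝ^{r₁×n₂×r₂}, T⁽³⁾ ∈ ℝ^{r₂×n₃×1} with X_{i₁,i₂,i₃} = Σ_{j₁,j₂} T⁽¹⁾_{1,i₁,j₁} T⁽²⁾_{j₁,i₂,j₂} T⁽³⁾_{j₂,i₃,1}. -/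
/-!
Any matrix `A` of rank at most `r` satisfies `A = (A G) C` for some `G`, `C` of inner size `r`:
embed the column space into `Kʳ` and lift a left inverse of that embedding through `A`.
Apply this to both unfoldings. The columns of `X₍₂₎ G₂` are combinations of the columns of
`X₍₂₎`, so for each fixed `i₂` they lie in the column space of `X₍₁₎ = (X₍₁₎ G₁) C₁`; contracting
`C₁` with `G₂` gives the middle core, while `X₍₁₎ G₁` and `C₂` are the outer cores.
-/

open Matrix

open Module in
theorem LinearMap.exists_comp_comp_eq_self_of_finrank_range_le {K M N : Type*} [DivisionRing K]
    [AddCommGroup M] [Module K M] [AddCommGroup N] [Module K N] (φ : M →ₗ[K] N)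
    [FiniteDimensional K (LinearMap.range φ)] {r : ℕ} (h : finrank K (LinearMap.range φ) ≤ r) :
    ∃ (g : (Fin r → K) →ₗ[K] M) (c : M →ₗ[K] Fin r → K), φ ∘ₗ g ∘ₗ c = φ := by
  obtain ⟨f, hf⟩ := finrank_le_iff_exists_linearMap.1 (h.trans_eq (finrank_fin_fun K).symm)
  obtain ⟨f', hf'f⟩ := f.exists_leftInverse_of_injective (LinearMap.ker_eq_bot.2 hf)
  obtain ⟨g, hg⟩ := projective_lifting_property φ.rangeRestrict f' φ.surjective_rangeRestrict
  refine ⟨g, f ∘ₗ φ.rangeRestrict, ?_⟩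
  calc φ ∘ₗ g ∘ₗ f ∘ₗ φ.rangeRestrict
      = (LinearMap.range φ).subtype ∘ₗ (φ.rangeRestrict ∘ₗ g) ∘ₗ f ∘ₗ φ.rangeRestrict := rfl
    _ = (LinearMap.range φ).subtype ∘ₗ (f' ∘ₗ f) ∘ₗ φ.rangeRestrict := by rw [hg]; rfl
    _ = φ := by rw [hf'f]; rfl

theorem Matrix.exists_mul_mul_eq_self_of_rank_le {K m n : Type*} [Field K] [Fintype m] [Fintype n]
    (A : Matrix m n K) {r : ℕ} (h : A.rank ≤ r) :
    ∃ (G : Matrix n (Fin r) K) (C : Matrix (Fin r) n K), A * G * C = A := by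
  classical
  obtain ⟨g, c, hgc⟩ := A.mulVecLin.exists_comp_comp_eq_self_of_finrank_range_le h
  refine ⟨LinearMap.toMatrix' g, LinearMap.toMatrix' c, toLin'.injective ?_⟩
  rw [toLin'_mul, toLin'_mul, toLin'_toMatrix', toLin'_toMatrix', toLin'_apply']
  exact hgc

/-- Existence of a TT decomposition for `d = 3`: if the unfoldings `X_(1)` and `X_(2)` of a
tensor `X ∈ ℝ^{n₁×n₂×n₃}` have ranks at most `r₁` and `r₂` respectively, then `X` admits an
exact tensor-train decomposition with ranks `r₁, r₂`. -/
theorem stmt_14 (n₁ n₂ n₃ r₁ r₂ : ℕ)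
    (X : Fin n₁ → Fin n₂ → Fin n₃ → ℝ)
    (X1 : Matrix (Fin n₁) (Fin n₂ × Fin n₃) ℝ)
    (hX1 : ∀ i jk, X1 i jk = X i jk.1 jk.2)
    (X2 : Matrix (Fin n₁ × Fin n₂) (Fin n₃) ℝ)
    (hX2 : ∀ ij k, X2 ij k = X ij.1 ij.2 k)
    (h1 : X1.rank ≤ r₁) (h2 : X2.rank ≤ r₂) :
    ∃ (T₁ : Fin 1 → Fin n₁ → Fin r₁ → ℝ) (T₂ : Fin r₁ → Fin n₂ → Fin r₂ → ℝ)
      (T₃ : Fin r₂ → Fin n₃ → Fin 1 → ℝ),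
      ∀ i₁ i₂ i₃, X i₁ i₂ i₃ = ∑ j₁, ∑ j₂, T₁ 0 i₁ j₁ * T₂ j₁ i₂ j₂ * T₃ j₂ i₃ 0 := by
  obtain ⟨G₁, C₁, hfac₁⟩ := X1.exists_mul_mul_eq_self_of_rank_le h1
  obtain ⟨G₂, C₂, hfac₂⟩ := X2.exists_mul_mul_eq_self_of_rank_le h2
  refine ⟨fun _ i₁ j₁ => (X1 * G₁) i₁ j₁, fun j₁ i₂ j₂ => ∑ k, C₁ j₁ (i₂, k) * G₂ k j₂,
    fun j₂ i₃ _ => C₂ j₂ i₃, fun i₁ i₂ i₃ => ?_⟩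
  have hmiddle : ∀ j₂, (X2 * G₂) (i₁, i₂) j₂ =
      ∑ j₁, (X1 * G₁) i₁ j₁ * ∑ k, C₁ j₁ (i₂, k) * G₂ k j₂ := by
    intro j₂
    calc (X2 * G₂) (i₁, i₂) j₂ = ∑ k, (X1 * G₁ * C₁) i₁ (i₂, k) * G₂ k j₂ := by
          rw [hfac₁]; simp only [mul_apply, hX1, hX2]
      _ = _ := by
          simp only [mul_apply, Finset.sum_mul, Finset.mul_sum, mul_assoc]
          exact Finset.sum_comm
  calc X i₁ i₂ i₃ = (X2 * G₂ * C₂) (i₁, i₂) i₃ := by rw [hfac₂, hX2]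
    _ = _ := by
        simp only [mul_apply (M := X2 * G₂), hmiddle, Finset.sum_mul]
        rw [Finset.sum_comm]
end
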